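/- Let $0 < \theta_1 < \infty$, $1 \leq p < \infty$, and suppose: (i) $f$ satisfies the John–Nirenberg-type inequality $|\{x \in Q : |f(x) - f_Q| > \lambda\}| \leq C_1 |Q| \exp\{-(1+r/\rho(x_0))^{-(N_0+1)\theta_1} C_2 \lambda / \|f\|\}$ for all cubes $Q = Q(x_0,r)$ and $\lambda > 0$; (ii) the weight $\omega$ satisfies the comparison estimate $\omega(E)/\omega(Q) \leq C (|E|/|Q|)^{\delta}(1+r/\rho(x_0))^{\eta}$ for measurable $E \subset Q$. Then for every cube $Q = Q(x_0,r)$, $\left(\frac{1}{\omega(Q)}\int_Q |f(x)-f_Q|^p \omega(x)\,dx\right)^{1/p} \leq C' (1+r/\rho(x_0))^{(N_0+1)\theta_1 + \eta/p}\, \|f\|$, where $C'$ depends only on $p, C, C_1, C_2, \delta$. -/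

import Mathlib

open MeasureTheory Metric Real

/-- Mean value of `f` on the set `Q`. -/
noncomputable def avgOn {d : ℕ} (f : EuclideanSpace ℝ (Fin d) → ℝ)
    (Q : Set (EuclideanSpace ℝ (Fin d))) : ℝ :=
  (volume Q).toReal⁻¹ * ∫ x in Q, f x

/-! By the layer-cake formula, `∫_Q |f - f_Q|^p ω = p ∫_0^∞ λ^(p-1) ω({x ∈ Q : |f - f_Q| > λ}) dλ`.
The comparison estimate for `ω`, applied to the level set, turns the John–Nirenberg bound into
`ω({|f - f_Q| > λ}) ≤ C C₁^δ (1 + r/ρ)^η ω(Q) e^(-δcλ)` with `c = C₂ (1 + r/ρ)^(-(N₀+1)θ₁) / ‖f‖`,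
and `p ∫_0^∞ λ^(p-1) e^(-δcλ) dλ = p Γ(p) / (δc)^p`. -/

open Set in
theorem lintegral_rpow_le_of_meas_lt_le_exp {α : Type*} [MeasurableSpace α] (μ : Measure α)
    {g : α → ℝ} (hg0 : 0 ≤ᵐ[μ] g) (hg : AEMeasurable g μ) {p K b : ℝ} (hp : 0 < p)
    (hK : 0 ≤ K) (hb : 0 < b)
    (htail : ∀ t > 0, μ {x | t < g x} ≤ ENNReal.ofReal (K * exp (-(b * t)))) :
    ∫⁻ x, ENNReal.ofReal (g x ^ p) ∂μ ≤ ENNReal.ofReal (p * Gamma p * K / b ^ p) := by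
  have hint : IntegrableOn (fun t : ℝ => t ^ (p - 1) * exp (-(b * t))) (Ioi 0) := by
    simpa using integrableOn_rpow_mul_exp_neg_mul_rpow (s := p - 1) (by linarith) one_pos hb
  have hgamma : ∫ t in Ioi (0 : ℝ), K * (t ^ (p - 1) * exp (-(b * t))) =
      p⁻¹ * (p * Gamma p * K / b ^ p) := by
    rw [integral_const_mul, Real.integral_rpow_mul_exp_neg_mul_Ioi hp hb,
      Real.div_rpow zero_le_one hb.le, Real.one_rpow]
    field_simp
  rw [lintegral_rpow_eq_lintegral_meas_lt_mul μ hg0 hg hp]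
  calc ENNReal.ofReal p * ∫⁻ t in Ioi 0, μ {x | t < g x} * ENNReal.ofReal (t ^ (p - 1))
      ≤ ENNReal.ofReal p * ∫⁻ t in Ioi 0, ENNReal.ofReal (K * (t ^ (p - 1) * exp (-(b * t)))) := by
        gcongr _ * ?_
        refine setLIntegral_mono' measurableSet_Ioi fun t (ht : 0 < t) => ?_
        calc μ {x | t < g x} * ENNReal.ofReal (t ^ (p - 1))
            ≤ ENNReal.ofReal (K * exp (-(b * t))) * ENNReal.ofReal (t ^ (p - 1)) := by
              gcongr; exact htail t ht
          _ = ENNReal.ofReal (K * (t ^ (p - 1) * exp (-(b * t)))) := by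
              rw [← ENNReal.ofReal_mul (by positivity)]; ring_nf
    _ = ENNReal.ofReal (p * Gamma p * K / b ^ p) := by
        rw [← ofReal_integral_eq_lintegral_ofReal (hint.const_mul K), hgamma,
          ← ENNReal.ofReal_mul hp.le, mul_inv_cancel_left₀ hp.ne']
        filter_upwards [ae_restrict_mem measurableSet_Ioi] with t (ht : 0 < t)
        positivity

theorem exists_measurableSet_withDensity_restrict_eq {α : Type*} [MeasurableSpace α]
    {μ : Measure α} {Q S : Set α} (hQ : MeasurableSet Q) (hS : NullMeasurableSet S (μ.restrict Q))
    (w : α → ENNReal) :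
    ∃ E ⊆ Q, MeasurableSet E ∧ μ E = μ (Q ∩ S) ∧
      (μ.restrict Q).withDensity w S = ∫⁻ x in E, w x ∂μ := by
  obtain ⟨T, -, hT, hTS⟩ := hS.exists_measurable_subset_ae_eq
  refine ⟨T ∩ Q, Set.inter_subset_right, hT.inter hQ, ?_, ?_⟩
  · rw [← Measure.restrict_apply hT, measure_congr hTS, Measure.restrict_apply' hQ, Set.inter_comm]
  · rw [← measure_congr (hTS.filter_mono (withDensity_absolutelyContinuous _ _).ae_le),
      withDensity_apply _ hT, Measure.restrict_restrict hT]

theorem setIntegral_rpow_mul_le_of_exp_tail {α : Type*} [MeasurableSpace α] {μ : Measure α}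
    {Q : Set α} (hQ : MeasurableSet Q) {ω g : α → ℝ} (hω0 : ∀ x, 0 ≤ ω x)
    (hω : IntegrableOn ω Q μ) (hg0 : ∀ x, 0 ≤ g x) (hg : AEMeasurable g (μ.restrict Q))
    {p A c δ W : ℝ} (hp : 0 < p) (hA : 0 ≤ A) (hc : 0 < c) (hδ : 0 < δ) (hW : 0 ≤ W)
    (hcmp : ∀ E, MeasurableSet E → E ⊆ Q →
      ∫ x in E, ω x ∂μ ≤ ((μ E).toReal / (μ Q).toReal) ^ δ * W)
    (hJN : ∀ t > 0, (μ {x ∈ Q | t < g x}).toReal ≤ A * (μ Q).toReal * exp (-(c * t))) :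
    ∫ x in Q, g x ^ p * ω x ∂μ ≤ p * Gamma p * (A ^ δ * W) / (δ * c) ^ p := by
  set ν := (μ.restrict Q).withDensity fun x => ENNReal.ofReal (ω x)
  have hνμ : ν ≪ μ.restrict Q := withDensity_absolutelyContinuous _ _
  have htail : ∀ t > 0, ν {x | t < g x} ≤ ENNReal.ofReal (A ^ δ * W * exp (-(δ * c * t))) := by
    intro t ht
    obtain ⟨E, hEQ, hE, hμE, hνE⟩ := exists_measurableSet_withDensity_restrict_eq hQ
      (nullMeasurableSet_lt aemeasurable_const hg) fun x => ENNReal.ofReal (ω x)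
    rw [hνE, ← ofReal_integral_eq_lintegral_ofReal (hω.mono_set hEQ) (ae_of_all _ hω0)]
    gcongr
    calc ∫ x in E, ω x ∂μ ≤ ((μ E).toReal / (μ Q).toReal) ^ δ * W := hcmp E hE hEQ
      _ ≤ (A * exp (-(c * t))) ^ δ * W := by
          gcongr
          refine div_le_of_le_mul₀ ENNReal.toReal_nonneg (by positivity) ?_
          exact (hμE ▸ hJN t ht).trans_eq (by ring)
      _ = A ^ δ * W * exp (-(δ * c * t)) := by
          rw [mul_rpow hA (exp_pos _).le, ← exp_mul]
          ring_nf
  have hJ : ∫ x in Q, g x ^ p * ω x ∂μ = (∫⁻ x, ENNReal.ofReal (g x ^ p) ∂ν).toReal := by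
    rw [← integral_eq_lintegral_of_nonneg_ae (ae_of_all _ fun x => by have := hg0 x; positivity)
      ((hg.mono_ac hνμ).pow_const p).aestronglyMeasurable,
      integral_withDensity_eq_integral_toReal_smul₀
        hω.aestronglyMeasurable.aemeasurable.ennreal_ofReal
        (ae_of_all _ fun _ => ENNReal.ofReal_lt_top)]
    refine setIntegral_congr_fun hQ fun x _ => ?_
    rw [ENNReal.toReal_ofReal (hω0 x), smul_eq_mul, mul_comm]
  rw [hJ]
  refine ENNReal.toReal_le_of_le_ofReal (by positivity) ?_
  exact lintegral_rpow_le_of_meas_lt_le_exp ν (ae_of_all _ hg0) (hg.mono_ac hνμ) hp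
    (by positivity) (by positivity) htail

theorem stmt_7_general {d : ℕ} (ρ : EuclideanSpace ℝ (Fin d) → ℝ) (hρ : ∀ x, 0 < ρ x)
    (N0 θ₁ p : ℝ) (hp : 1 ≤ p)
    (f : EuclideanSpace ℝ (Fin d) → ℝ) (hf : LocallyIntegrable f volume)
    (M : ℝ) (hM : 0 < M)  -- `M = ‖f‖_{BMO_{ρ,θ₁}}`
    (C C₁ C₂ δ η : ℝ) (hC : 0 < C) (hC₁ : 0 < C₁) (hC₂ : 0 < C₂) (hδ : 0 < δ)
    -- (i) John–Nirenberg-type inequality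
    (hJN : ∀ (x0 : EuclideanSpace ℝ (Fin d)) (r lam : ℝ), 0 < r → 0 < lam →
      (volume {x ∈ ball x0 r | lam < |f x - avgOn f (ball x0 r)|}).toReal ≤
        C₁ * (volume (ball x0 r)).toReal *
          Real.exp (-((1 + r / ρ x0) ^ (-((N0 + 1) * θ₁)) * (C₂ * lam / M))))
    (ω : EuclideanSpace ℝ (Fin d) → ℝ) (hω : ∀ x, 0 ≤ ω x)
    (hloc : LocallyIntegrable ω volume)
    -- (ii) comparison estimate for the weight `ω`
    (hcmp : ∀ (x0 : EuclideanSpace ℝ (Fin d)) (r : ℝ), 0 < r →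
      ∀ E : Set (EuclideanSpace ℝ (Fin d)), MeasurableSet E → E ⊆ ball x0 r →
        ∫ x in E, ω x ≤
          C * ((volume E).toReal / (volume (ball x0 r)).toReal) ^ δ *
            (1 + r / ρ x0) ^ η * ∫ x in ball x0 r, ω x) :
    ∃ C' > 0, ∀ (x0 : EuclideanSpace ℝ (Fin d)) (r : ℝ), 0 < r →
      ((∫ x in ball x0 r, ω x)⁻¹ *
          ∫ x in ball x0 r, |f x - avgOn f (ball x0 r)| ^ p * ω x) ^ (1 / p) ≤
        C' * (1 + r / ρ x0) ^ ((N0 + 1) * θ₁ + η / p) * M := by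
  have hp0 : 0 < p := one_pos.trans_le hp
  set D := p * Gamma p * C * C₁ ^ δ
  refine ⟨D ^ (1 / p) / (δ * C₂), by positivity, fun x0 r hr => ?_⟩
  set Q := ball x0 r
  set u := 1 + r / ρ x0
  have hu : 0 < u := by have := div_pos hr (hρ x0); positivity
  set k := (N0 + 1) * θ₁
  set s := u ^ k * M / (δ * C₂)
  set ωQ := ∫ x in Q, ω x
  have hωQ0 : 0 ≤ ωQ := setIntegral_nonneg measurableSet_ball fun x _ => hω x
  have hfQ : IntegrableOn f Q :=
    (hf.integrableOn_isCompact (isCompact_closedBall x0 r)).mono_set ball_subset_closedBall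
  have hωQ : IntegrableOn ω Q :=
    (hloc.integrableOn_isCompact (isCompact_closedBall x0 r)).mono_set ball_subset_closedBall
  have hJ := setIntegral_rpow_mul_le_of_exp_tail measurableSet_ball hω hωQ
    (fun x => abs_nonneg (f x - avgOn f Q)) (by have := hfQ.aemeasurable; fun_prop) hp0 hC₁.le
    (by positivity : 0 < C₂ / (u ^ k * M)) hδ (by positivity : 0 ≤ C * u ^ η * ωQ)
    (fun E hE hEQ => (hcmp x0 r hr E hE hEQ).trans_eq (by ring))
    (fun t ht => (hJN x0 r t hr ht).trans_eq (by rw [rpow_neg hu.le]; field_simp))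
  have hδc : δ * (C₂ / (u ^ k * M)) = s⁻¹ := by simp only [s, inv_div]; field_simp
  rw [hδc, inv_rpow (by positivity), div_inv_eq_mul] at hJ
  calc _ ≤ (D * u ^ η * s ^ p) ^ (1 / p) := by
        refine rpow_le_rpow (mul_nonneg (inv_nonneg.2 hωQ0)
          (setIntegral_nonneg measurableSet_ball fun x _ => mul_nonneg (by positivity) (hω x))) ?_
          (by positivity)
        exact inv_mul_le_of_le_mul₀ hωQ0 (by positivity) (hJ.trans_eq (by ring))
    _ = D ^ (1 / p) * u ^ (η / p) * s := by
        rw [mul_rpow (by positivity) (by positivity), mul_rpow (by positivity) (by positivity),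
          ← rpow_mul hu.le, mul_one_div, one_div, rpow_rpow_inv (by positivity) hp0.ne']
    _ = _ := by rw [rpow_add hu]; ring

theorem stmt_7 {d : ℕ} (ρ : EuclideanSpace ℝ (Fin d) → ℝ) (hρ : ∀ x, 0 < ρ x)
    (N0 θ₁ p : ℝ) (hN0 : 0 < N0) (hθ₁ : 0 < θ₁) (hp : 1 ≤ p)
    (f : EuclideanSpace ℝ (Fin d) → ℝ) (hf : LocallyIntegrable f volume)
    (M : ℝ) (hM : 0 < M)  -- `M = ‖f‖_{BMO_{ρ,θ₁}}`
    (C C₁ C₂ δ η : ℝ) (hC : 0 < C) (hC₁ : 0 < C₁) (hC₂ : 0 < C₂) (hδ : 0 < δ) (hη : 0 < η)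
    -- (i) John–Nirenberg-type inequality
    (hJN : ∀ (x0 : EuclideanSpace ℝ (Fin d)) (r lam : ℝ), 0 < r → 0 < lam →
      (volume {x ∈ ball x0 r | lam < |f x - avgOn f (ball x0 r)|}).toReal ≤
        C₁ * (volume (ball x0 r)).toReal *
          Real.exp (-((1 + r / ρ x0) ^ (-((N0 + 1) * θ₁)) * (C₂ * lam / M))))
    (ω : EuclideanSpace ℝ (Fin d) → ℝ) (hω : ∀ x, 0 ≤ ω x)
    (hloc : LocallyIntegrable ω volume)
    -- (ii) comparison estimate for the weight `ω`
    (hcmp : ∀ (x0 : EuclideanSpace ℝ (Fin d)) (r : ℝ), 0 < r →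
      ∀ E : Set (EuclideanSpace ℝ (Fin d)), MeasurableSet E → E ⊆ ball x0 r →
        ∫ x in E, ω x ≤
          C * ((volume E).toReal / (volume (ball x0 r)).toReal) ^ δ *
            (1 + r / ρ x0) ^ η * ∫ x in ball x0 r, ω x) :
    ∃ C' > 0, ∀ (x0 : EuclideanSpace ℝ (Fin d)) (r : ℝ), 0 < r →
      ((∫ x in ball x0 r, ω x)⁻¹ *
          ∫ x in ball x0 r, |f x - avgOn f (ball x0 r)| ^ p * ω x) ^ (1 / p) ≤
        C' * (1 + r / ρ x0) ^ ((N0 + 1) * θ₁ + η / p) * M :=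
  stmt_7_general ρ hρ N0 θ₁ p hp f hf M hM C C₁ C₂ δ η hC hC₁ hC₂ hδ hJN ω hω hloc hcmp
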